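/- For every integer k ≥ 2 there exist a finite connected split graph G and two distance-2 dominating sets D_s, D_t of G, each of size k, such that there exists a TS-sequence in G from D_s to D_t of length exactly M*_TS(G,D_s,D_t) + 2, and every TS-sequence in G from D_s to D_t has length at least M*_TS(G,D_s,D_t) + 2. -/

import Mathlib

/-- `D` is a distance-`r` dominating set of `G`. -/
def IsDrDS {V : Type*} (G : SimpleGraph V) (r : ℕ) (D : Set V) : Prop :=
  ∀ v : V, ∃ u ∈ D, G.Reachable u v ∧ G.dist u v ≤ r

/-- A TS-sequence of length `q` of distance-`r` dominating sets of `G`. -/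
def IsTSSeq {V : Type*} (G : SimpleGraph V) (r q : ℕ)
    (Dseq : Fin (q + 1) → Finset V) : Prop :=
  (∀ i, IsDrDS G r ↑(Dseq i)) ∧
  ∀ i : Fin q, ∃ x ∈ Dseq i.castSucc, ∃ y, y ∉ Dseq i.castSucc ∧ G.Adj x y ∧
    (↑(Dseq i.succ) : Set V) = (↑(Dseq i.castSucc) \ {x}) ∪ {y}

/-- `M*_TS(G, Ds, Dt)`: the minimum over all bijections `f : Ds → Dt` of
`∑_{s ∈ Ds} dist_G(s, f s)`. -/
noncomputable def MstarTS {V : Type*} (G : SimpleGraph V) (Ds Dt : Finset V) : ℕ :=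
  sInf {m | ∃ f : ↥Ds ≃ ↥Dt, m = ∑ s : ↥Ds, G.dist (s : V) ((f s : V))}

inductive Vt (n : ℕ) : Type
  | c | d | a | b | w
  | p (i : Fin n)
deriving DecidableEq, Fintype

namespace Vt

def adjB {n : ℕ} : Vt n → Vt n → Bool
  | .c, .d | .d, .c => true
  | .c, .a | .a, .c => true
  | .c, .b | .b, .c => true
  | .c, .p _ | .p _, .c => true
  | .d, .w | .w, .d => true
  | _, _ => false

def Gr (n : ℕ) : SimpleGraph (Vt n) where
  Adj x y := adjB x y = true
  symm := ⟨by intro x y h; cases x <;> cases y <;> simp_all [adjB]⟩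
  loopless := ⟨by intro x h; cases x <;> simp_all [adjB]⟩

lemma adj_c_d {n} : (Gr n).Adj .c .d := by simp [Gr, adjB]
lemma adj_c_a {n} : (Gr n).Adj .c .a := by simp [Gr, adjB]
lemma adj_c_b {n} : (Gr n).Adj .c .b := by simp [Gr, adjB]
lemma adj_c_p {n} (i : Fin n) : (Gr n).Adj .c (.p i) := by simp [Gr, adjB]
lemma adj_d_w {n} : (Gr n).Adj .d .w := by simp [Gr, adjB]

lemma adj_to_w {n} (x : Vt n) (h : (Gr n).Adj x .w) : x = .d := by
  cases x <;> simp_all [Gr, adjB]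
lemma adj_to_a {n} (x : Vt n) (h : (Gr n).Adj x .a) : x = .c := by
  cases x <;> simp_all [Gr, adjB]
lemma adj_to_b {n} (x : Vt n) (h : (Gr n).Adj x .b) : x = .c := by
  cases x <;> simp_all [Gr, adjB]
lemma adj_to_p {n} (x : Vt n) (i : Fin n) (h : (Gr n).Adj x (.p i)) : x = .c := by
  cases x <;> simp_all [Gr, adjB]
lemma adj_to_d {n} (x : Vt n) (h : (Gr n).Adj x .d) : x = .c ∨ x = .w := by
  cases x <;> simp_all [Gr, adjB]
lemma adj_from_c {n} (y : Vt n) (h : (Gr n).Adj .c y) :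
    y = .d ∨ y = .a ∨ y = .b ∨ ∃ i, y = .p i := by
  cases y <;> simp_all [Gr, adjB]

lemma reach_dist_c {n} (v : Vt n) : (Gr n).Reachable .c v ∧ (Gr n).dist .c v ≤ 2 := by
  cases v with
  | c => exact ⟨SimpleGraph.Reachable.refl _, by rw [SimpleGraph.dist_self]; omega⟩
  | d => exact ⟨adj_c_d.reachable, le_trans (SimpleGraph.dist_le adj_c_d.toWalk) (by simp)⟩
  | a => exact ⟨adj_c_a.reachable, le_trans (SimpleGraph.dist_le adj_c_a.toWalk) (by simp)⟩
  | b => exact ⟨adj_c_b.reachable, le_trans (SimpleGraph.dist_le adj_c_b.toWalk) (by simp)⟩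
  | w =>
      refine ⟨⟨SimpleGraph.Walk.cons adj_c_d adj_d_w.toWalk⟩, ?_⟩
      exact le_trans (SimpleGraph.dist_le (SimpleGraph.Walk.cons adj_c_d adj_d_w.toWalk)) (by simp)
  | p i => exact ⟨(adj_c_p i).reachable,
      le_trans (SimpleGraph.dist_le (adj_c_p i).toWalk) (by simp)⟩

lemma reach_dist_d {n} (v : Vt n) : (Gr n).Reachable .d v ∧ (Gr n).dist .d v ≤ 2 := by
  have hcd : (Gr n).Adj .d .c := (Gr n).adj_symm adj_c_d
  cases v with
  | d => exact ⟨SimpleGraph.Reachable.refl _, by rw [SimpleGraph.dist_self]; omega⟩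
  | c => exact ⟨hcd.reachable, le_trans (SimpleGraph.dist_le hcd.toWalk) (by simp)⟩
  | w => exact ⟨adj_d_w.reachable, le_trans (SimpleGraph.dist_le adj_d_w.toWalk) (by simp)⟩
  | a =>
      refine ⟨⟨SimpleGraph.Walk.cons hcd adj_c_a.toWalk⟩, ?_⟩
      exact le_trans (SimpleGraph.dist_le (SimpleGraph.Walk.cons hcd adj_c_a.toWalk)) (by simp)
  | b =>
      refine ⟨⟨SimpleGraph.Walk.cons hcd adj_c_b.toWalk⟩, ?_⟩
      exact le_trans (SimpleGraph.dist_le (SimpleGraph.Walk.cons hcd adj_c_b.toWalk)) (by simp)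
  | p i =>
      refine ⟨⟨SimpleGraph.Walk.cons hcd (adj_c_p i).toWalk⟩, ?_⟩
      exact le_trans (SimpleGraph.dist_le (SimpleGraph.Walk.cons hcd (adj_c_p i).toWalk)) (by simp)

lemma gr_connected (n : ℕ) : (Gr n).Connected := by
  rw [SimpleGraph.connected_iff]
  exact ⟨fun u v => ((reach_dist_c u).1.symm.trans (reach_dist_c v).1), ⟨.c⟩⟩

lemma far_from_w {n} (u : Vt n) (hu : u ≠ .c ∧ u ≠ .d ∧ u ≠ .w)
    (W : (Gr n).Walk u .w) : ¬ W.length ≤ 2 := by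
  intro hlen
  cases W with
  | nil => exact hu.2.2 rfl
  | cons h W' =>
    rename_i z
    cases W' with
    | nil => exact hu.2.1 (adj_to_w u h)
    | cons h' W'' =>
      rename_i z'
      cases W'' with
      | nil =>
          have hz : z = Vt.d := adj_to_w z h'
          subst hz
          rcases adj_to_d u h with h1 | h1
          · exact hu.1 h1
          · exact hu.2.2 h1
      | cons h'' W''' => simp [SimpleGraph.Walk.length_cons] at hlen

lemma dist_ge_w {n} (u : Vt n) (hu : u ≠ .c ∧ u ≠ .d ∧ u ≠ .w) :
    ¬ ((Gr n).Reachable u .w ∧ (Gr n).dist u .w ≤ 2) := by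
  rintro ⟨hr, hd⟩
  obtain ⟨W, hW⟩ := hr.exists_walk_length_eq_dist
  exact far_from_w u hu W (by omega)

lemma dist_a_b {n} : (Gr n).dist .a .b = 2 := by
  have hle : (Gr n).dist .a .b ≤ 2 := by
    have := SimpleGraph.dist_le (SimpleGraph.Walk.cons ((Gr n).adj_symm adj_c_a) adj_c_b.toWalk)
    simpa using this
  have h0 : (Gr n).dist .a .b ≠ 0 := by
    rw [SimpleGraph.dist_ne_zero_iff_ne_and_reachable]
    exact ⟨by simp, ((gr_connected n).preconnected _ _)⟩
  have h1 : (Gr n).dist .a .b ≠ 1 := by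
    intro h
    rw [SimpleGraph.dist_eq_one_iff_adj] at h
    simp [Gr, adjB] at h
  omega

/-! ### dominating sets -/

def pend (n : ℕ) : Finset (Vt n) := Finset.univ.image Vt.p

@[simp] lemma mem_pend {n} (x : Vt n) : x ∈ pend n ↔ ∃ i, x = Vt.p i := by
  simp [pend, eq_comm]

def Ds (n : ℕ) : Finset (Vt n) := insert .a (insert .c (pend n))
def Dt (n : ℕ) : Finset (Vt n) := insert .b (insert .c (pend n))

lemma card_pend (n : ℕ) : (pend n).card = n := by
  rw [pend, Finset.card_image_of_injective _ (fun i j h => by cases h; rfl)]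
  simp

lemma card_Ds (n : ℕ) : (Ds n).card = n + 2 := by
  rw [Ds, Finset.card_insert_of_notMem (by simp), Finset.card_insert_of_notMem (by simp),
    card_pend]
lemma card_Dt (n : ℕ) : (Dt n).card = n + 2 := by
  rw [Dt, Finset.card_insert_of_notMem (by simp), Finset.card_insert_of_notMem (by simp),
    card_pend]

lemma dom_of_c {n} {D : Finset (Vt n)} (h : Vt.c ∈ D) : IsDrDS (Gr n) 2 ↑D :=
  fun v => ⟨.c, by exact_mod_cast h, reach_dist_c v⟩
lemma dom_of_d {n} {D : Finset (Vt n)} (h : Vt.d ∈ D) : IsDrDS (Gr n) 2 ↑D :=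
  fun v => ⟨.d, by exact_mod_cast h, reach_dist_d v⟩

lemma not_dom {n} {D : Finset (Vt n)}
    (h : ∀ x ∈ D, x ≠ .c ∧ x ≠ .d ∧ x ≠ .w) : ¬ IsDrDS (Gr n) 2 ↑D := by
  intro hD
  obtain ⟨u, hu, hr⟩ := hD .w
  exact dist_ge_w u (h u (by exact_mod_cast hu)) hr

/-! ### Mstar computation -/

lemma mstar_eq (n : ℕ) : MstarTS (Gr n) (Ds n) (Dt n) = 2 := by
  have hmemDs : ∀ x : Vt n, x ∈ Ds n ↔ (x = .a ∨ x = .c ∨ ∃ i, x = .p i) := by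
    intro x; simp [Ds]
  have hswap : ∀ x : Vt n, x ∈ Ds n ↔ (Equiv.swap Vt.a Vt.b) x ∈ Dt n := by
    intro x
    cases x <;> simp [Ds, Dt, Equiv.swap_apply_def]
  let f0 : ↥(Ds n) ≃ ↥(Dt n) := (Equiv.swap Vt.a Vt.b).subtypeEquiv hswap
  have hsum : (∑ s : ↥(Ds n), (Gr n).dist (s : Vt n) ((f0 s : Vt n))) = 2 := by
    have : ∀ s : ↥(Ds n), ((f0 s : Vt n)) = Equiv.swap Vt.a Vt.b (s : Vt n) := by
      rintro ⟨x, hx⟩; rfl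
    calc (∑ s : ↥(Ds n), (Gr n).dist (s : Vt n) ((f0 s : Vt n)))
        = ∑ s : ↥(Ds n), (Gr n).dist (s : Vt n) (Equiv.swap Vt.a Vt.b (s : Vt n)) := by
          exact Finset.sum_congr rfl (fun s _ => by rw [this s])
      _ = ∑ x ∈ Ds n, (Gr n).dist x (Equiv.swap Vt.a Vt.b x) :=
          Finset.sum_coe_sort (Ds n) (fun x => (Gr n).dist x (Equiv.swap Vt.a Vt.b x))
      _ = 2 := by
          rw [Ds, Finset.sum_insert (by simp), Finset.sum_insert (by simp)]
          have h1 : Equiv.swap Vt.a Vt.b (Vt.a : Vt n) = Vt.b := Equiv.swap_apply_left _ _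
          have h2 : Equiv.swap Vt.a Vt.b (Vt.c : Vt n) = Vt.c := by
            apply Equiv.swap_apply_of_ne_of_ne <;> simp
          rw [h1, h2, dist_a_b, SimpleGraph.dist_self]
          have h3 : ∑ x ∈ pend n, (Gr n).dist x (Equiv.swap Vt.a Vt.b x) = 0 := by
            apply Finset.sum_eq_zero
            intro x hx
            obtain ⟨i, rfl⟩ := (mem_pend x).1 hx
            rw [Equiv.swap_apply_of_ne_of_ne (by simp) (by simp), SimpleGraph.dist_self]
          rw [h3]
          norm_num
  apply le_antisymm
  · exact Nat.sInf_le ⟨f0, hsum.symm⟩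
  · refine le_csInf ?_ ?_
    · exact ⟨2, f0, hsum.symm⟩
    rintro m ⟨f, rfl⟩
    have ha : (Vt.a : Vt n) ∈ Ds n := by simp [Ds]
    have hb : (Vt.b : Vt n) ∈ Dt n := by simp [Dt]
    set x1 : ↥(Ds n) := ⟨.a, ha⟩ with hx1
    set x2 : ↥(Ds n) := f.symm ⟨.b, hb⟩ with hx2
    by_cases hne : x1 = x2
    · have hfb : ((f x1 : Vt n)) = Vt.b := by rw [hne, hx2]; simp
      have : (Gr n).dist (x1 : Vt n) ((f x1 : Vt n)) = 2 := by
        rw [hfb]; exact dist_a_b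
      calc 2 = (Gr n).dist (x1 : Vt n) ((f x1 : Vt n)) := this.symm
        _ ≤ _ := Finset.single_le_sum (f := fun s : ↥(Ds n) => (Gr n).dist (s : Vt n) ((f s : Vt n))) (fun i _ => Nat.zero_le _) (Finset.mem_univ x1)
    · have t1 : 1 ≤ (Gr n).dist (x1 : Vt n) ((f x1 : Vt n)) := by
        apply (gr_connected n).pos_dist_of_ne
        intro heq
        have : ((f x1 : Vt n)) ∈ Dt n := (f x1).2
        rw [← heq] at this
        simp [Dt] at this
      have t2 : 1 ≤ (Gr n).dist (x2 : Vt n) ((f x2 : Vt n)) := by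
        apply (gr_connected n).pos_dist_of_ne
        have hfx2 : ((f x2 : Vt n)) = Vt.b := by rw [hx2]; simp
        rw [hfx2]
        have : (x2 : Vt n) ∈ Ds n := x2.2
        intro heq; rw [heq] at this; simp [Ds] at this
      calc 2 = 1 + 1 := rfl
        _ ≤ (Gr n).dist (x1 : Vt n) ((f x1 : Vt n)) + (Gr n).dist (x2 : Vt n) ((f x2 : Vt n)) :=
            add_le_add t1 t2
        _ = ∑ s ∈ ({x1, x2} : Finset ↥(Ds n)), (Gr n).dist (s : Vt n) ((f s : Vt n)) :=
            (Finset.sum_pair (f := fun s : ↥(Ds n) => (Gr n).dist (s : Vt n) ((f s : Vt n))) hne).symm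
        _ ≤ _ := Finset.sum_le_sum_of_subset (Finset.subset_univ _)


/-! ### the TS sequence -/


def C1 (n : ℕ) : Finset (Vt n) := insert .a (insert .d (pend n))
def C2 (n : ℕ) : Finset (Vt n) := insert .c (insert .d (pend n))
def C3 (n : ℕ) : Finset (Vt n) := insert .b (insert .d (pend n))

def seq (n : ℕ) : Fin 5 → Finset (Vt n) := fun i =>
  match i with
  | ⟨0, _⟩ => Ds n
  | ⟨1, _⟩ => C1 n
  | ⟨2, _⟩ => C2 n
  | ⟨3, _⟩ => C3 n
  | ⟨4, _⟩ => Dt n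
  | ⟨m+5, h⟩ => absurd h (by omega)

lemma seq_isTSSeq (n : ℕ) : IsTSSeq (Gr n) 2 4 (seq n) := by
  constructor
  · intro i
    fin_cases i
    · exact dom_of_c (by simp [seq, Ds])
    · exact dom_of_d (by simp [seq, C1])
    · exact dom_of_c (by simp [seq, C2])
    · exact dom_of_d (by simp [seq, C3])
    · exact dom_of_c (by simp [seq, Dt])
  · intro i
    fin_cases i
    · refine ⟨.c, by simp [seq, Ds], .d, by simp [seq, Ds], adj_c_d, ?_⟩
      show (↑(C1 n) : Set (Vt n)) = ↑(Ds n) \ {Vt.c} ∪ {Vt.d}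
      ext v; cases v <;> simp [C1, Ds]
    · refine ⟨.a, by simp [seq, C1], .c, by simp [seq, C1], (Gr n).adj_symm adj_c_a, ?_⟩
      show (↑(C2 n) : Set (Vt n)) = ↑(C1 n) \ {Vt.a} ∪ {Vt.c}
      ext v; cases v <;> simp [C1, C2]
    · refine ⟨.c, by show Vt.c ∈ C2 n; simp [C2], .b, by show Vt.b ∉ C2 n; simp [C2], adj_c_b, ?_⟩
      show (↑(C3 n) : Set (Vt n)) = ↑(C2 n) \ {Vt.c} ∪ {Vt.b}
      ext v; cases v <;> simp [C2, C3]
    · refine ⟨.d, by show Vt.d ∈ C3 n; simp [C3], .c, by show Vt.c ∉ C3 n; simp [C3], (Gr n).adj_symm adj_c_d, ?_⟩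
      show (↑(Dt n) : Set (Vt n)) = ↑(C3 n) \ {Vt.d} ∪ {Vt.c}
      ext v; cases v <;> simp [C3, Dt]

/-! ### lower bound -/

lemma move_finset {n} {D D' : Finset (Vt n)} {x y : Vt n}
    (h : (↑D' : Set (Vt n)) = ↑D \ {x} ∪ {y}) : D' = insert y (D.erase x) := by
  apply Finset.coe_injective
  rw [Finset.coe_insert, Finset.coe_erase, h, Set.insert_eq, Set.union_comm]

lemma first_move {n} {D1 : Finset (Vt n)} {x y : Vt n}
    (hx : x ∈ Ds n) (hy : y ∉ Ds n) (hadj : (Gr n).Adj x y)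
    (heq : D1 = insert y ((Ds n).erase x)) (hdom : IsDrDS (Gr n) 2 ↑D1) :
    D1 = C1 n := by
  have hx' : x = Vt.a ∨ x = Vt.c ∨ ∃ i, x = Vt.p i := by simpa [Ds] using hx
  rcases hx' with rfl | rfl | ⟨i, rfl⟩
  · exact absurd (by simp [Ds, adj_to_a y ((Gr n).adj_symm hadj)] : y ∈ Ds n) hy
  · rcases adj_from_c y hadj with rfl | rfl | rfl | ⟨i, rfl⟩
    · rw [heq]; ext v; cases v <;> simp [Ds, C1]
    · exact absurd (by simp [Ds] : Vt.a ∈ Ds n) hy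
    · exfalso
      apply not_dom (D := D1) ?_ hdom
      intro z hz
      rw [heq] at hz
      rcases Finset.mem_insert.1 hz with rfl | hz'
      · exact ⟨by simp, by simp, by simp⟩
      · have hz2 := Finset.mem_of_mem_erase hz'
        have : z = Vt.a ∨ z = Vt.c ∨ ∃ i, z = Vt.p i := by simpa [Ds] using hz2
        have hzc : z ≠ Vt.c := (Finset.mem_erase.1 hz').1
        rcases this with rfl | rfl | ⟨i, rfl⟩
        · exact ⟨by simp, by simp, by simp⟩
        · exact absurd rfl hzc
        · exact ⟨by simp, by simp, by simp⟩
    · exact absurd (by simp [Ds] : Vt.p i ∈ Ds n) hy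
  · exact absurd (by simp [Ds, adj_to_p y i ((Gr n).adj_symm hadj)] : y ∈ Ds n) hy

lemma second_move {n} {D2 : Finset (Vt n)} {x y : Vt n}
    (hx : x ∈ C1 n) (hadj : (Gr n).Adj x y)
    (heq : D2 = insert y ((C1 n).erase x)) :
    Vt.b ∉ D2 ∧ (Vt.a ∈ D2 ∨ Vt.d ∈ D2) := by
  have hx' : x = Vt.a ∨ x = Vt.d ∨ ∃ i, x = Vt.p i := by simpa [C1] using hx
  have hyc : y = Vt.c ∨ y = Vt.w := by
    rcases hx' with rfl | rfl | ⟨i, rfl⟩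
    · exact Or.inl (adj_to_a y ((Gr n).adj_symm hadj))
    · exact adj_to_d y ((Gr n).adj_symm hadj)
    · exact Or.inl (adj_to_p y i ((Gr n).adj_symm hadj))
  constructor
  · rw [heq]
    intro hb
    rcases Finset.mem_insert.1 hb with hb1 | hb2
    · rcases hyc with rfl | rfl <;> simp at hb1
    · have := Finset.mem_of_mem_erase hb2
      simp [C1] at this
  · rcases hx' with rfl | rfl | ⟨i, rfl⟩
    · right; rw [heq]
      exact Finset.mem_insert_of_mem (Finset.mem_erase.2 ⟨by simp, by simp [C1]⟩)
    · left; rw [heq]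
      exact Finset.mem_insert_of_mem (Finset.mem_erase.2 ⟨by simp, by simp [C1]⟩)
    · left; rw [heq]
      exact Finset.mem_insert_of_mem (Finset.mem_erase.2 ⟨by simp, by simp [C1]⟩)

lemma final_move {n} {D : Finset (Vt n)} {x y : Vt n}
    (hx : x ∈ D) (hadj : (Gr n).Adj x y)
    (heq : Dt n = insert y (D.erase x))
    (hb : Vt.b ∉ D) (had : Vt.a ∈ D ∨ Vt.d ∈ D) : False := by
  have hby : Vt.b ∈ insert y (D.erase x) := by rw [← heq]; simp [Dt]
  have hyb : y = Vt.b := by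
    rcases Finset.mem_insert.1 hby with h | h
    · exact h.symm
    · exact absurd (Finset.mem_of_mem_erase h) hb
  subst hyb
  have hxc : x = Vt.c := adj_to_b x hadj
  subst hxc
  rcases had with ha | hd
  · have : Vt.a ∈ Dt n := by
      rw [heq]; exact Finset.mem_insert_of_mem (Finset.mem_erase.2 ⟨by simp, ha⟩)
    simp [Dt] at this
  · have : Vt.d ∈ Dt n := by
      rw [heq]; exact Finset.mem_insert_of_mem (Finset.mem_erase.2 ⟨by simp, hd⟩)
    simp [Dt] at this

lemma lower_bound {n : ℕ} (q : ℕ) (Dseq : Fin (q + 1) → Finset (Vt n))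
    (hseq : IsTSSeq (Gr n) 2 q Dseq) (h0 : Dseq 0 = Ds n)
    (hl : Dseq (Fin.last q) = Dt n) : 4 ≤ q := by
  by_contra hlt
  push_neg at hlt
  interval_cases q
  · -- q = 0
    have : Ds n = Dt n := h0.symm.trans hl
    have hb : Vt.b ∈ Ds n := by rw [this]; simp [Dt]
    simp [Ds] at hb
  · -- q = 1
    obtain ⟨x, hx, y, hy, hadj, hset⟩ := hseq.2 0
    have e0 : (0 : Fin 1).castSucc = (0 : Fin 2) := rfl
    have e1 : (0 : Fin 1).succ = Fin.last 1 := rfl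
    rw [e0, h0] at hx hy hset
    rw [e1, hl] at hset
    exact final_move hx hadj (move_finset hset) (by simp [Ds]) (Or.inl (by simp [Ds]))
  · -- q = 2
    obtain ⟨x, hx, y, hy, hadj, hset⟩ := hseq.2 0
    have e0 : (0 : Fin 2).castSucc = (0 : Fin 3) := rfl
    have e1 : (0 : Fin 2).succ = (1 : Fin 3) := rfl
    rw [e0, h0] at hx hy hset
    rw [e1] at hset
    have hD1 : Dseq 1 = C1 n :=
      first_move hx hy hadj (move_finset hset) (hseq.1 1)
    obtain ⟨x2, hx2, y2, hy2, hadj2, hset2⟩ := hseq.2 1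
    have e2 : (1 : Fin 2).castSucc = (1 : Fin 3) := rfl
    have e3 : (1 : Fin 2).succ = Fin.last 2 := rfl
    rw [e2, hD1] at hx2 hy2 hset2
    rw [e3, hl] at hset2
    exact final_move hx2 hadj2 (move_finset hset2) (by simp [C1]) (Or.inr (by simp [C1]))
  · -- q = 3
    obtain ⟨x, hx, y, hy, hadj, hset⟩ := hseq.2 0
    have e0 : (0 : Fin 3).castSucc = (0 : Fin 4) := rfl
    have e1 : (0 : Fin 3).succ = (1 : Fin 4) := rfl
    rw [e0, h0] at hx hy hset
    rw [e1] at hset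
    have hD1 : Dseq 1 = C1 n :=
      first_move hx hy hadj (move_finset hset) (hseq.1 1)
    obtain ⟨x2, hx2, y2, hy2, hadj2, hset2⟩ := hseq.2 1
    have e2 : (1 : Fin 3).castSucc = (1 : Fin 4) := rfl
    have e3 : (1 : Fin 3).succ = (2 : Fin 4) := rfl
    rw [e2, hD1] at hx2 hy2 hset2
    rw [e3] at hset2
    obtain ⟨hb2, had2⟩ := second_move hx2 hadj2 (move_finset hset2)
    obtain ⟨x3, hx3, y3, hy3, hadj3, hset3⟩ := hseq.2 2
    have e4 : (2 : Fin 3).castSucc = (2 : Fin 4) := rfl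
    have e5 : (2 : Fin 3).succ = Fin.last 3 := rfl
    rw [e4] at hx3 hy3 hset3
    rw [e5, hl] at hset3
    exact final_move hx3 hadj3 (move_finset hset3) hb2 had2

end Vt

theorem stmt8 (k : ℕ) (hk : 2 ≤ k) :
    ∃ (V : Type) (_ : Fintype V) (G : SimpleGraph V) (K S : Set V),
      K ∪ S = Set.univ ∧ Disjoint K S ∧ G.IsClique K ∧
      (∀ a ∈ S, ∀ b ∈ S, ¬ G.Adj a b) ∧ G.Connected ∧
      ∃ Ds Dt : Finset V,
        IsDrDS G 2 ↑Ds ∧ IsDrDS G 2 ↑Dt ∧ Ds.card = k ∧ Dt.card = k ∧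
        (∃ (q : ℕ) (Dseq : Fin (q + 1) → Finset V), IsTSSeq G 2 q Dseq ∧
            Dseq 0 = Ds ∧ Dseq (Fin.last q) = Dt ∧ q = MstarTS G Ds Dt + 2) ∧
        (∀ (q : ℕ) (Dseq : Fin (q + 1) → Finset V), IsTSSeq G 2 q Dseq →
            Dseq 0 = Ds → Dseq (Fin.last q) = Dt → MstarTS G Ds Dt + 2 ≤ q) := by
  set n := k - 2 with hn
  refine ⟨Vt n, inferInstance, Vt.Gr n, {Vt.c, Vt.d}, {Vt.c, Vt.d}ᶜ,
    Set.union_compl_self _, disjoint_compl_right, ?_, ?_, Vt.gr_connected n,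
    Vt.Ds n, Vt.Dt n, Vt.dom_of_c (by simp [Vt.Ds]), Vt.dom_of_c (by simp [Vt.Dt]),
    by rw [Vt.card_Ds]; omega, by rw [Vt.card_Dt]; omega, ?_, ?_⟩
  · -- clique
    intro x hx y hy hne
    simp only [Set.mem_insert_iff, Set.mem_singleton_iff] at hx hy
    rcases hx with rfl | rfl <;> rcases hy with rfl | rfl
    · exact absurd rfl hne
    · exact Vt.adj_c_d
    · exact (Vt.Gr n).adj_symm Vt.adj_c_d
    · exact absurd rfl hne
  · -- independent
    intro u hu v hv hadj
    simp only [Set.mem_compl_iff, Set.mem_insert_iff, Set.mem_singleton_iff] at hu hv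
    cases u <;> cases v <;> simp_all [Vt.Gr, Vt.adjB]
  · -- upper: the sequence of length 4
    refine ⟨4, Vt.seq n, Vt.seq_isTSSeq n, rfl, rfl, ?_⟩
    rw [Vt.mstar_eq]
  · -- lower bound
    intro q Dseq hseq h0 hl
    rw [Vt.mstar_eq]
    exact Vt.lower_bound q Dseq hseq h0 hl
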